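/- arXiv:2605.19267 — 3 statements merged into one kernel-verified Lean document; each statement's English description precedes it below -/
import Mathlib

section
/- Fix W > 0, T > 0, N ∈ (0, 1), F_max ≥ 0, σ ≥ 0, r_c ≥ 0 with (1 − N)·(σ²/8 + r_c) > 0. Define π_std,std(X) = (W/(X + 2W))·F_max − (σ²/8)·W·T and π_HLCP,std(X) = (N·W/(X + (1+N)·W))·F_max − N·(σ²/8)·W·T + (1 − N)·W·r_c·T. Then there exists X₀ > 0 such that for all X > X₀, π_HLCP,std(X) > π_std,std(X); i.e., unilateral deviation from the standard AMM to the HLCP is strictly profitable under sufficiently large background liquidity. -/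
/-! As the background liquidity `X` grows, both fee shares vanish, so the payoff gain from
deviating tends to `(1 - N) W T (σ²/8 + r_c)`: the LVR saved on the idle capital plus its
collateral yield. This limit is positive, hence the gain is positive for all large `X`. -/

open Filter Topology

theorem tendsto_const_div_add_atTop_zero (c d : ℝ) :
    Tendsto (fun X : ℝ => c / (X + d)) atTop (𝓝 0) :=
  tendsto_const_nhds.div_atTop (tendsto_atTop_add_const_right _ d tendsto_id)

theorem exists_pos_forall_gt_of_eventually_atTop {P : ℝ → Prop} (h : ∀ᶠ X in atTop, P X) :
    ∃ X₀ : ℝ, 0 < X₀ ∧ ∀ X > X₀, P X := by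
  obtain ⟨a, ha⟩ := eventually_atTop.1 h
  exact ⟨max a 1, by positivity, fun X hX => ha X (le_of_max_le_left hX.le)⟩

theorem hlcp_unilateral_deviation_general (W T N F_max σ r_c : ℝ)
    (hW : 0 < W) (hT : 0 < T)
    (hpos : 0 < (1 - N) * (σ ^ 2 / 8 + r_c)) :
    ∃ X₀ : ℝ, 0 < X₀ ∧ ∀ X : ℝ, X > X₀ →
      (N * W / (X + (1 + N) * W)) * F_max - N * (σ ^ 2 / 8) * W * T
        + (1 - N) * W * r_c * T
      > (W / (X + 2 * W)) * F_max - (σ ^ 2 / 8) * W * T := by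
  set G := (1 - N) * (σ ^ 2 / 8 + r_c) * (W * T) with hG_def
  have hG : 0 < G := mul_pos hpos (mul_pos hW hT)
  have hgain : Tendsto (fun X => (N * W / (X + (1 + N) * W)) * F_max
      - (W / (X + 2 * W)) * F_max + G) atTop (𝓝 G) := by
    simpa using (((tendsto_const_div_add_atTop_zero (N * W) ((1 + N) * W)).mul_const F_max).sub
      ((tendsto_const_div_add_atTop_zero W (2 * W)).mul_const F_max)).add_const G
  obtain ⟨X₀, hX₀, hgain_pos⟩ :=
    exists_pos_forall_gt_of_eventually_atTop (hgain.eventually_const_lt hG)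
  refine ⟨X₀, hX₀, fun X hX => ?_⟩
  have hX_gain := hgain_pos X hX
  rw [hG_def] at hX_gain
  linarith

/-- Unilateral deviation from the standard AMM to the HLCP is
strictly profitable under sufficiently large background liquidity X. -/
theorem hlcp_unilateral_deviation (W T N F_max σ r_c : ℝ)
    (hW : 0 < W) (hT : 0 < T) (hN0 : 0 < N) (hN1 : N < 1)
    (hF : 0 ≤ F_max) (hσ : 0 ≤ σ) (hr : 0 ≤ r_c)
    (hpos : 0 < (1 - N) * (σ ^ 2 / 8 + r_c)) :
    ∃ X₀ : ℝ, 0 < X₀ ∧ ∀ X : ℝ, X > X₀ →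
      (N * W / (X + (1 + N) * W)) * F_max - N * (σ ^ 2 / 8) * W * T
        + (1 - N) * W * r_c * T
      > (W / (X + 2 * W)) * F_max - (σ ^ 2 / 8) * W * T :=
  hlcp_unilateral_deviation_general W T N F_max σ r_c hW hT hpos
end

section
/- Fix W > 0, T > 0, N ∈ (0, 1), F_max ≥ 0, σ ≥ 0, r_c ≥ 0 with (1 − N)·(σ²/8 + r_c) > 0. Define π_HLCP,HLCP(X) = (N·W/(X + 2N·W))·F_max − N·(σ²/8)·W·T + (1 − N)·W·r_c·T and π_std,HLCP(X) = (W/(X + (1+N)·W))·F_max − (σ²/8)·W·T. Then there exists X₀ > 0 such that for all X > X₀, π_HLCP,HLCP(X) > π_std,HLCP(X); i.e., for sufficiently large background liquidity the free-rider defection from the symmetric HLCP profile to the standard AMM is strictly unprofitable, so (HLCP, HLCP) is a strict Nash equilibrium of the limit game. -/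
/-!
Deviating from (HLCP, HLCP) to the standard AMM changes the deviator's payoff by two fee terms,
each of the form `c / (X + d)`, plus the constant `(1 - N) (σ²/8 + r_c) W T`: the LVR the buffer
avoids and the collateral yield it earns. The fee terms vanish as the background liquidity `X`
grows, so for large `X` the constant, which is positive, decides the sign.
-/

open Filter Topology

lemma tendsto_div_add_const_atTop_zero (a b : ℝ) :
    Tendsto (fun X : ℝ => a / (X + b)) atTop (𝓝 0) :=
  tendsto_const_nhds.div_atTop (tendsto_atTop_add_const_right _ b tendsto_id)

lemma Filter.Eventually.exists_gt_forall_gt_of_atTop {α : Type*} [Preorder α]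
    [IsDirectedOrder α] [Nonempty α] [NoMaxOrder α] {p : α → Prop}
    (h : ∀ᶠ x in atTop, p x) (c : α) : ∃ x₀, c < x₀ ∧ ∀ x > x₀, p x := by
  obtain ⟨a, ha⟩ := (h.and (eventually_gt_atTop c)).exists_forall_of_atTop
  exact ⟨a, (ha a le_rfl).2, fun x hx => (ha x hx.le).1⟩

theorem hlcp_no_free_rider_general (W T N F_max σ r_c : ℝ)
    (hW : 0 < W) (hT : 0 < T)
    (hpos : 0 < (1 - N) * (σ ^ 2 / 8 + r_c)) :
    ∃ X₀ : ℝ, 0 < X₀ ∧ ∀ X : ℝ, X > X₀ →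
      (N * W / (X + 2 * N * W)) * F_max - N * (σ ^ 2 / 8) * W * T
        + (1 - N) * W * r_c * T
      > (W / (X + (1 + N) * W)) * F_max - (σ ^ 2 / 8) * W * T := by
  set G := (1 - N) * (σ ^ 2 / 8 + r_c) * W * T
  have hG : 0 < G := mul_pos (mul_pos hpos hW) hT
  have hgain : Tendsto (fun X : ℝ =>
      ((N * W / (X + 2 * N * W)) * F_max - N * (σ ^ 2 / 8) * W * T + (1 - N) * W * r_c * T)
        - ((W / (X + (1 + N) * W)) * F_max - (σ ^ 2 / 8) * W * T)) atTop (𝓝 G) := by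
    have hfees := ((tendsto_div_add_const_atTop_zero (N * W) (2 * N * W)).mul_const F_max).sub
      ((tendsto_div_add_const_atTop_zero W ((1 + N) * W)).mul_const F_max)
    convert hfees.add_const G using 1
    · funext X
      ring
    · simp
  obtain ⟨X₀, hX₀, hgain_pos⟩ :=
    (hgain.eventually (eventually_gt_nhds hG)).exists_gt_forall_gt_of_atTop 0
  exact ⟨X₀, hX₀, fun X hX => sub_pos.mp (hgain_pos X hX)⟩

/-- For sufficiently large background liquidity, free-rider
defection from the symmetric HLCP profile to the standard AMM is strictly
unprofitable, so (HLCP, HLCP) is a strict Nash equilibrium of the limit game. -/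
theorem hlcp_no_free_rider (W T N F_max σ r_c : ℝ)
    (hW : 0 < W) (hT : 0 < T) (hN0 : 0 < N) (hN1 : N < 1)
    (hF : 0 ≤ F_max) (hσ : 0 ≤ σ) (hr : 0 ≤ r_c)
    (hpos : 0 < (1 - N) * (σ ^ 2 / 8 + r_c)) :
    ∃ X₀ : ℝ, 0 < X₀ ∧ ∀ X : ℝ, X > X₀ →
      (N * W / (X + 2 * N * W)) * F_max - N * (σ ^ 2 / 8) * W * T
        + (1 - N) * W * r_c * T
      > (W / (X + (1 + N) * W)) * F_max - (σ ^ 2 / 8) * W * T :=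
  hlcp_no_free_rider_general W T N F_max σ r_c hW hT hpos
end

section
/- Fix W > 0, T > 0, X > 0, F_max ≥ 0, N ∈ (0, 1), σ ≥ 0, r_c ≥ 0 with (1 − N)·(σ²/8 + r_c) > 0. If background liquidity compresses proportionally to N, the symmetric HLCP payoff (N·W/(N·X + 2N·W))·F_max − N·(σ²/8)·W·T + (1 − N)·W·r_c·T exceeds the symmetric standard-AMM payoff (W/(X + 2W))·F_max − (σ²/8)·W·T by exactly (1 − N)·W·(σ²/8 + r_c)·T > 0; hence the symmetric HLCP outcome strictly Pareto-improves on the symmetric standard-AMM outcome. -/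
/-! Proportional compression scales every depth in the fee split by `N`, so each player's fee share
is unchanged; the payoff difference is then exactly the LVR avoided on the dormant capital plus the
yield it earns. -/

theorem symmetric_share_mul_left {K : Type*} [Field K] {c : K} (hc : c ≠ 0) (w x : K) :
    c * w / (c * x + 2 * c * w) = w / (x + 2 * w) := by
  rw [show c * x + 2 * c * w = c * (x + 2 * w) by ring, mul_div_mul_left _ _ hc]

theorem hlcp_payoff_sub_amm_payoff {K : Type*} [Field K] {N : K} (hN : N ≠ 0)
    (W T X F_max v r_c : K) :
    ((N * W / (N * X + 2 * N * W)) * F_max - N * v * W * T + (1 - N) * W * r_c * T)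
      - ((W / (X + 2 * W)) * F_max - v * W * T)
      = (1 - N) * W * (v + r_c) * T := by
  rw [symmetric_share_mul_left hN]
  ring

theorem hlcp_pareto_improvement_general (W T X F_max N σ r_c : ℝ)
    (hW : 0 < W) (hT : 0 < T)
    (hN0 : 0 < N)
    (hpos : 0 < (1 - N) * (σ ^ 2 / 8 + r_c)) :
    ((N * W / (N * X + 2 * N * W)) * F_max - N * (σ ^ 2 / 8) * W * T
        + (1 - N) * W * r_c * T)
      - ((W / (X + 2 * W)) * F_max - (σ ^ 2 / 8) * W * T)
      = (1 - N) * W * (σ ^ 2 / 8 + r_c) * T ∧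
    0 < (1 - N) * W * (σ ^ 2 / 8 + r_c) * T := by
  refine ⟨hlcp_payoff_sub_amm_payoff hN0.ne' W T X F_max _ r_c, ?_⟩
  calc (0 : ℝ) < (1 - N) * (σ ^ 2 / 8 + r_c) * W * T := by positivity
    _ = (1 - N) * W * (σ ^ 2 / 8 + r_c) * T := by ring

/-- Under proportional compression of the background liquidity,
the symmetric HLCP payoff exceeds the symmetric standard-AMM payoff by exactly
(1 − N)·W·(σ²/8 + r_c)·T > 0, hence a strict Pareto improvement. -/
theorem hlcp_pareto_improvement (W T X F_max N σ r_c : ℝ)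
    (hW : 0 < W) (hT : 0 < T) (hX : 0 < X) (hF : 0 ≤ F_max)
    (hN0 : 0 < N) (hN1 : N < 1) (hσ : 0 ≤ σ) (hr : 0 ≤ r_c)
    (hpos : 0 < (1 - N) * (σ ^ 2 / 8 + r_c)) :
    ((N * W / (N * X + 2 * N * W)) * F_max - N * (σ ^ 2 / 8) * W * T
        + (1 - N) * W * r_c * T)
      - ((W / (X + 2 * W)) * F_max - (σ ^ 2 / 8) * W * T)
      = (1 - N) * W * (σ ^ 2 / 8 + r_c) * T ∧
    0 < (1 - N) * W * (σ ^ 2 / 8 + r_c) * T :=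
  hlcp_pareto_improvement_general W T X F_max N σ r_c hW hT hN0 hpos
end
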